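/- For every ℓ ∈ ℕ₀ and every k ∈ {1, …, 2^ℓ}, the squared Schauder increments sum to the dyadic step size: (Δ^{(0,1)}_{k,ℓ})² + Σ_{i=1}^{ℓ} Σ_{j=1}^{2^{i-1}} (Δ^{(i,j)}_{k,ℓ})² = 2^{-ℓ}. -/

import Mathlib

open MeasureTheory

/-- The Haar functions on `[0,1]`: `haar 0 j = 1` (only `j = 1` is used), and for `i ≥ 1`,
`haar i j = 2^((i-1)/2) * (1_{I^{(i,j)}} - 1_{J^{(i,j)}})`. -/
noncomputable def haar : ℕ → ℕ → ℝ → ℝ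
  | 0, _, _ => 1
  | (i + 1), j, t =>
      2 ^ ((i : ℝ) / 2) *
        ((Set.Ico (((j : ℝ) - 1) / 2 ^ i) (((j : ℝ) - 1 / 2) / 2 ^ i)).indicator
            (fun _ => (1 : ℝ)) t
          - (Set.Ico (((j : ℝ) - 1 / 2) / 2 ^ i) ((j : ℝ) / 2 ^ i)).indicator
            (fun _ => (1 : ℝ)) t)

/-- The Schauder functions `s^{(i,j)}(t) = ∫_0^t h^{(i,j)}(u) du`. -/
noncomputable def schauder (i j : ℕ) (t : ℝ) : ℝ := ∫ u in (0 : ℝ)..t, haar i j u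

/-- The Schauder increments `Δ^{(i,j)}_{k,ℓ} = s^{(i,j)}(k/2^ℓ) - s^{(i,j)}((k-1)/2^ℓ)`. -/
noncomputable def schauderInc (i j k ℓ : ℕ) : ℝ :=
  schauder i j ((k : ℝ) / 2 ^ ℓ) - schauder i j (((k : ℝ) - 1) / 2 ^ ℓ)

/-!
A Haar function of level `i ≤ ℓ` is constant on each dyadic cell `[(k-1)/2^ℓ, k/2^ℓ)`, so
`Δ^{(i,j)}_{k,ℓ} = 2^{-ℓ} h^{(i,j)}(t)` with `t = (k-1)/2^ℓ`. For fixed `i ≥ 1` the supports of the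
`h^{(i,j)}` tile `[0,1)` and `(h^{(i,j)})² = 2^{i-1}` on its support, so `∑_j h^{(i,j)}(t)² = 2^{i-1}`.
Hence the sum is `2^{-2ℓ} (1 + ∑_{i=1}^{ℓ} 2^{i-1}) = 2^{-ℓ}`.
-/

open Set

lemma intervalIntegrable_haar (i j : ℕ) (a b : ℝ) : IntervalIntegrable (haar i j) volume a b := by
  have hind (c d : ℝ) : IntervalIntegrable ((Ico c d).indicator fun _ => (1 : ℝ)) volume a b :=
    ((integrableOn_const (by simp)).integrable_indicator measurableSet_Ico).intervalIntegrable
  cases i with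
  | zero => exact intervalIntegrable_const
  | succ m => exact ((hind _ _).sub (hind _ _)).const_mul _

lemma floor_mul_eq_iff_mem_Ico {N : ℝ} (hN : 0 < N) (a : ℤ) (t : ℝ) :
    ⌊t * N⌋ = a ↔ t ∈ Ico (a / N) ((a + 1) / N) := by
  rw [Int.floor_eq_iff, mem_Ico, div_le_iff₀ hN, lt_div_iff₀ hN]

lemma floor_mul_two_pow_of_le {n ℓ : ℕ} (hn : n ≤ ℓ) (t : ℝ) :
    ⌊t * 2 ^ n⌋ = ⌊t * 2 ^ ℓ⌋ / 2 ^ (ℓ - n) := by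
  have h : t * 2 ^ n = t * 2 ^ ℓ / ((2 ^ (ℓ - n) : ℕ) : ℝ) := by
    rw [← Nat.add_sub_cancel' hn]
    push_cast
    rw [pow_add, Nat.add_sub_cancel_left]
    field_simp
  rw [h, Int.floor_div_natCast]
  push_cast
  rfl

lemma haar_succ_apply (m j : ℕ) (t : ℝ) :
    haar (m + 1) j t = 2 ^ ((m : ℝ) / 2) *
      ((if ⌊t * 2 ^ (m + 1)⌋ = 2 * j - 2 then 1 else 0) -
        (if ⌊t * 2 ^ (m + 1)⌋ = 2 * j - 1 then 1 else 0)) := by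
  have hN : (0 : ℝ) < 2 ^ (m + 1) := by positivity
  have hI : Ico (((j : ℝ) - 1) / 2 ^ m) (((j : ℝ) - 1 / 2) / 2 ^ m) =
      Ico (((2 * j - 2 : ℤ) : ℝ) / 2 ^ (m + 1)) ((((2 * j - 2 : ℤ) : ℝ) + 1) / 2 ^ (m + 1)) := by
    push_cast; rw [pow_succ]; congr 1 <;> ring
  have hJ : Ico (((j : ℝ) - 1 / 2) / 2 ^ m) ((j : ℝ) / 2 ^ m) =
      Ico (((2 * j - 1 : ℤ) : ℝ) / 2 ^ (m + 1)) ((((2 * j - 1 : ℤ) : ℝ) + 1) / 2 ^ (m + 1)) := by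
    push_cast; rw [pow_succ]; congr 1 <;> ring
  simp only [haar, hI, hJ, indicator_apply, ← floor_mul_eq_iff_mem_Ico hN]

lemma haar_eq_of_floor_eq {i ℓ : ℕ} (hi : i ≤ ℓ) (j : ℕ) {s t : ℝ}
    (h : ⌊s * 2 ^ ℓ⌋ = ⌊t * 2 ^ ℓ⌋) : haar i j s = haar i j t := by
  cases i with
  | zero => rfl
  | succ m => simp only [haar_succ_apply, floor_mul_two_pow_of_le hi, h]

lemma schauderInc_eq_haar_div {i ℓ : ℕ} (hi : i ≤ ℓ) (j k : ℕ) :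
    schauderInc i j k ℓ = haar i j (((k : ℝ) - 1) / 2 ^ ℓ) / 2 ^ ℓ := by
  have hN : (0 : ℝ) < 2 ^ ℓ := by positivity
  set a := ((k : ℝ) - 1) / 2 ^ ℓ
  have hlen : (k : ℝ) / 2 ^ ℓ - a = 1 / 2 ^ ℓ := by simp only [a]; field_simp; ring
  have hlt : a < (k : ℝ) / 2 ^ ℓ := by linarith [hlen, one_div_pos.2 hN]
  have hcell : Ico a ((k : ℝ) / 2 ^ ℓ) =
      Ico (((k - 1 : ℤ) : ℝ) / 2 ^ ℓ) ((((k - 1 : ℤ) : ℝ) + 1) / 2 ^ ℓ) := by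
    push_cast; rw [sub_add_cancel]
  have hconst : EqOn (haar i j) (fun _ => haar i j a) (Ioo a ((k : ℝ) / 2 ^ ℓ)) := by
    intro x hx
    refine haar_eq_of_floor_eq hi j ?_
    rw [(floor_mul_eq_iff_mem_Ico hN _ _).2 (hcell ▸ Ioo_subset_Ico_self hx),
      (floor_mul_eq_iff_mem_Ico hN _ _).2 (hcell ▸ left_mem_Ico.2 hlt)]
  rw [schauderInc, schauder, schauder, intervalIntegral.integral_interval_sub_left
      (intervalIntegrable_haar ..) (intervalIntegrable_haar ..),
    intervalIntegral.integral_congr_Ioo_of_le hlt.le hconst,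
    intervalIntegral.integral_const, hlen, smul_eq_mul]
  ring

lemma haar_succ_sq (m j : ℕ) (t : ℝ) :
    haar (m + 1) j t ^ 2 = 2 ^ m * if ⌊t * 2 ^ m⌋ = j - 1 then 1 else 0 := by
  have hsq : ((2 : ℝ) ^ ((m : ℝ) / 2)) ^ 2 = 2 ^ m := by
    rw [← Real.rpow_natCast, ← Real.rpow_mul zero_le_two]
    norm_num
  rw [haar_succ_apply, floor_mul_two_pow_of_le (Nat.le_add_right m 1), mul_pow, hsq,
    Nat.add_sub_cancel_left, pow_one]
  split_ifs <;> first | omega | norm_num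

lemma sum_haar_succ_sq {t : ℝ} (ht : t ∈ Ico 0 1) (m : ℕ) :
    ∑ j ∈ Finset.Icc 1 (2 ^ m), haar (m + 1) j t ^ 2 = 2 ^ m := by
  have hpos : (0 : ℝ) < 2 ^ m := by positivity
  have hlo : 0 ≤ ⌊t * 2 ^ m⌋ := Int.floor_nonneg.2 (mul_nonneg ht.1 hpos.le)
  have hhi : ⌊t * 2 ^ m⌋ < ((2 ^ m : ℕ) : ℤ) := by
    rw [Int.floor_lt]; push_cast; nlinarith [ht.2]
  have hcell (j : ℕ) : ⌊t * 2 ^ m⌋ = j - 1 ↔ j = ⌊t * 2 ^ m⌋.toNat + 1 := by omega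
  simp_rw [haar_succ_sq, hcell, ← Finset.mul_sum, Finset.sum_ite_eq']
  rw [if_pos (Finset.mem_Icc.2 ⟨by omega, by omega⟩), mul_one]

lemma sum_Icc_two_pow_pred (n : ℕ) : ∑ i ∈ Finset.Icc 1 n, (2 : ℝ) ^ (i - 1) = 2 ^ n - 1 := by
  induction n with
  | zero => simp
  | succ n ih =>
    rw [Finset.sum_Icc_succ_top (by omega), ih, Nat.add_sub_cancel, pow_succ]
    ring

/-- The squared Schauder increments sum to the dyadic step size `2^{-ℓ}`. -/
theorem squared_schauder_increments_sum (ℓ k : ℕ) (hk1 : 1 ≤ k) (hk2 : k ≤ 2 ^ ℓ) :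
    schauderInc 0 1 k ℓ ^ 2 +
      ∑ i ∈ Finset.Icc 1 ℓ, ∑ j ∈ Finset.Icc 1 (2 ^ (i - 1)), schauderInc i j k ℓ ^ 2 =
    ((2 : ℝ) ^ ℓ)⁻¹ := by
  have hN : (0 : ℝ) < 2 ^ ℓ := by positivity
  have ht : ((k : ℝ) - 1) / 2 ^ ℓ ∈ Ico 0 1 := by
    have hk1' : (1 : ℝ) ≤ k := by exact_mod_cast hk1
    have hk2' : (k : ℝ) ≤ 2 ^ ℓ := by exact_mod_cast hk2
    rw [mem_Ico, div_lt_one hN]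
    exact ⟨div_nonneg (by linarith) hN.le, by linarith⟩
  have hlevel : ∀ i ∈ Finset.Icc 1 ℓ,
      ∑ j ∈ Finset.Icc 1 (2 ^ (i - 1)), schauderInc i j k ℓ ^ 2 = 2 ^ (i - 1) / (2 ^ ℓ) ^ 2 := by
    intro i hi
    obtain ⟨m, rfl⟩ : ∃ m, i = m + 1 := ⟨i - 1, by grind⟩
    simp_rw [schauderInc_eq_haar_div (Finset.mem_Icc.1 hi).2, div_pow, ← Finset.sum_div,
      Nat.add_sub_cancel, sum_haar_succ_sq ht]
  rw [schauderInc_eq_haar_div ℓ.zero_le, Finset.sum_congr rfl hlevel, ← Finset.sum_div,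
    sum_Icc_two_pow_pred, haar]
  field_simp
  ring
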